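/- Weak transitions lemma: if P ≈ Q and P ⟹α⟹ P' with bn(α) fresh for Q, then there exists Q' with Q ⟹α⟹ Q' and P' ≈ Q'. -/

import Mathlib

open scoped Classical

universe u v

abbrev Atom : Type := ℕ

/-- A permutation of atoms is finitary if it moves only finitely many atoms. -/
def IsFinPerm (π : Equiv.Perm Atom) : Prop := {a : Atom | π a ≠ a}.Finite

/-- `N` supports `x` with respect to the permutation action `act`. -/
def SupportsAct {X : Type*} (act : Equiv.Perm Atom → X → X) (N : Set Atom) (x : X) : Prop :=
  ∀ π : Equiv.Perm Atom, IsFinPerm π → (∀ a ∈ N, π a = a) → act π x = x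

/-- The support of `x`: the intersection of all finite supporting sets. -/
def suppAct {X : Type*} (act : Equiv.Perm Atom → X → X) (x : X) : Set Atom :=
  ⋂₀ {N : Set Atom | N.Finite ∧ SupportsAct act N x}

/-- `x` is finitely supported. -/
def FinSuppAct {X : Type*} (act : Equiv.Perm Atom → X → X) (x : X) : Prop :=
  ∃ N : Set Atom, N.Finite ∧ SupportsAct act N x

/-- The pointwise action on subsets. -/
def setAct {X : Type*} (act : Equiv.Perm Atom → X → X) (π : Equiv.Perm Atom) (s : Set X) :
    Set X :=
  act π '' s

/-- A nominal set: a permutation action where every element is finitely supported. -/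
structure Nominal (X : Type*) where
  act : Equiv.Perm Atom → X → X
  act_one : ∀ x, act 1 x = x
  act_mul : ∀ π π' x, act (π * π') x = act π (act π' x)
  finSupp : ∀ x, FinSuppAct act x

/-- A nominal transition system. -/
structure NTS (States Pred Act : Type*) where
  nomS : Nominal States
  nomP : Nominal Pred
  nomA : Nominal Act
  sat : States → Pred → Prop
  sat_eqv : ∀ π, IsFinPerm π → ∀ P φ, sat P φ → sat (nomS.act π P) (nomP.act π φ)
  bn : Act → Finset Atom
  bn_eqv : ∀ π, IsFinPerm π → ∀ α, (bn (nomA.act π α) : Set Atom) = π '' (bn α : Set Atom)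
  bn_supp : ∀ α, (bn α : Set Atom) ⊆ suppAct nomA.act α
  tr : States → Act → States → Prop
  tr_eqv : ∀ π, IsFinPerm π → ∀ P α P', tr P α P' →
    tr (nomS.act π P) (nomA.act π α) (nomS.act π P')
  tr_alpha : ∀ (a b : Atom) (P : States) (α : Act) (P' : States), a ∈ bn α →
    b ∉ suppAct nomA.act α → b ∉ suppAct nomS.act P' → tr P α P' →
    tr P (nomA.act (Equiv.swap a b) α) (nomS.act (Equiv.swap a b) P')

variable {S Pr Ac : Type*}

/-- A (strong) bisimulation: symmetric, statically implicating, and simulating. -/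
def NTS.IsBisim (T : NTS S Pr Ac) (R : S → S → Prop) : Prop :=
  (∀ P Q, R P Q → R Q P) ∧
  ∀ P Q, R P Q →
    (∀ φ, T.sat P φ → T.sat Q φ) ∧
    (∀ α P', (∀ a ∈ T.bn α, a ∉ suppAct T.nomS.act Q) → T.tr P α P' →
      ∃ Q', T.tr Q α Q' ∧ R P' Q')

/-- Bisimilarity. -/
def NTS.Bisim (T : NTS S Pr Ac) (P Q : S) : Prop := ∃ R, T.IsBisim R ∧ R P Q

/-- `P ⟹ P'`: a finite (possibly empty) sequence of `τ`-transitions. -/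
inductive TauStar (T : NTS S Pr Ac) (τ : Ac) : S → S → Prop
  | refl (P : S) : TauStar T τ P P
  | step {P P'' P' : S} : T.tr P τ P'' → TauStar T τ P'' P' → TauStar T τ P P'

/-- The weak transition `P ⟹α⟹ P'`: just `⟹` if `α = τ`, otherwise
`⟹ ∘ ⟶α⟶ ∘ ⟹`. -/
def NTS.weakTr (T : NTS S Pr Ac) (τ : Ac) (P : S) (α : Ac) (P' : S) : Prop :=
  if α = τ then TauStar T τ P P'
  else ∃ P₁ P₂, TauStar T τ P P₁ ∧ T.tr P₁ α P₂ ∧ TauStar T τ P₂ P'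

/-- A weak bisimulation: symmetric, satisfying weak static implication and weak
simulation. -/
def NTS.IsWeakBisim (T : NTS S Pr Ac) (τ : Ac) (R : S → S → Prop) : Prop :=
  (∀ P Q, R P Q → R Q P) ∧
  ∀ P Q, R P Q →
    (∀ φ, T.sat P φ → ∃ Q', TauStar T τ Q Q' ∧ T.sat Q' φ ∧ R P Q') ∧
    (∀ α P', (∀ a ∈ T.bn α, a ∉ suppAct T.nomS.act Q) → T.tr P α P' →
      ∃ Q', T.weakTr τ Q α Q' ∧ R P' Q')

/-- Weak bisimilarity. -/
def NTS.WBisim (T : NTS S Pr Ac) (τ : Ac) (P Q : S) : Prop :=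
  ∃ R, T.IsWeakBisim τ R ∧ R P Q


/-! ### Auxiliary lemmas -/

lemma finPerm_one : IsFinPerm (1 : Equiv.Perm Atom) := by
  have : {a : Atom | (1 : Equiv.Perm Atom) a ≠ a} = ∅ := by
    ext a; simp
  rw [IsFinPerm, this]; exact Set.finite_empty

lemma finPerm_swap (a b : Atom) : IsFinPerm (Equiv.swap a b) := by
  apply Set.Finite.subset ((Set.finite_singleton b).insert a)
  intro c hc
  simp only [Set.mem_setOf_eq] at hc
  by_contra hmem
  simp only [Set.mem_insert_iff, Set.mem_singleton_iff] at hmem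
  push_neg at hmem
  exact hc (Equiv.swap_apply_of_ne_of_ne hmem.1 hmem.2)

lemma finPerm_mul {π π' : Equiv.Perm Atom} (h : IsFinPerm π) (h' : IsFinPerm π') :
    IsFinPerm (π * π') := by
  apply Set.Finite.subset (h.union h')
  intro a ha
  simp only [Set.mem_setOf_eq, Equiv.Perm.mul_apply] at ha
  by_contra hmem
  simp only [Set.mem_union, Set.mem_setOf_eq] at hmem
  push_neg at hmem
  rw [hmem.2, hmem.1] at ha
  exact ha rfl

lemma finPerm_inv {π : Equiv.Perm Atom} (h : IsFinPerm π) : IsFinPerm π⁻¹ := by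
  have : {a : Atom | π⁻¹ a ≠ a} = {a : Atom | π a ≠ a} := by
    ext a
    simp only [Set.mem_setOf_eq]
    rw [not_iff_not, Equiv.Perm.inv_eq_iff_eq, eq_comm]
  rw [IsFinPerm, this]; exact h

variable {X : Type*}

lemma Nominal.act_inv_act (nom : Nominal X) (π : Equiv.Perm Atom) (x : X) :
    nom.act π⁻¹ (nom.act π x) = x := by
  rw [← nom.act_mul, inv_mul_cancel, nom.act_one]

lemma Nominal.act_act_inv (nom : Nominal X) (π : Equiv.Perm Atom) (x : X) :
    nom.act π (nom.act π⁻¹ x) = x := by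
  rw [← nom.act_mul, mul_inv_cancel, nom.act_one]

lemma supp_subset_of_supports {act : Equiv.Perm Atom → X → X} {N : Set Atom} {x : X}
    (hfin : N.Finite) (hsupp : SupportsAct act N x) : suppAct act x ⊆ N :=
  Set.sInter_subset_of_mem ⟨hfin, hsupp⟩

lemma exists_support_not_mem {act : Equiv.Perm Atom → X → X} {x : X} {a : Atom}
    (ha : a ∉ suppAct act x) :
    ∃ N : Set Atom, N.Finite ∧ SupportsAct act N x ∧ a ∉ N := by
  rw [suppAct, Set.mem_sInter] at ha
  push_neg at ha
  obtain ⟨N, hN, haN⟩ := ha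
  exact ⟨N, hN.1, hN.2, haN⟩

lemma supports_image (nom : Nominal X) {π : Equiv.Perm Atom} (hπ : IsFinPerm π)
    {N : Set Atom} {x : X} (hN : SupportsAct nom.act N x) :
    SupportsAct nom.act (π '' N) (nom.act π x) := by
  intro ρ hρ hfix
  have hσfin : IsFinPerm (π⁻¹ * ρ * π) := finPerm_mul (finPerm_mul (finPerm_inv hπ) hρ) hπ
  have hσfix : ∀ a ∈ N, (π⁻¹ * ρ * π) a = a := by
    intro a ha
    have : ρ (π a) = π a := hfix (π a) ⟨a, ha, rfl⟩
    simp [Equiv.Perm.mul_apply, this]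
  have hσ : nom.act (π⁻¹ * ρ * π) x = x := hN _ hσfin hσfix
  calc nom.act ρ (nom.act π x) = nom.act (ρ * π) x := (nom.act_mul _ _ _).symm
    _ = nom.act (π * (π⁻¹ * ρ * π)) x := by congr 1; group
    _ = nom.act π (nom.act (π⁻¹ * ρ * π) x) := nom.act_mul _ _ _
    _ = nom.act π x := by rw [hσ]

lemma supp_act_subset (nom : Nominal X) {π : Equiv.Perm Atom} (hπ : IsFinPerm π) (x : X) :
    suppAct nom.act (nom.act π x) ⊆ π '' suppAct nom.act x := by
  intro a ha
  by_contra hmem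
  have hinv : π⁻¹ a ∉ suppAct nom.act x := by
    intro hc
    exact hmem ⟨π⁻¹ a, hc, by simp⟩
  obtain ⟨N, hNfin, hNsupp, haN⟩ := exists_support_not_mem hinv
  have himg : SupportsAct nom.act (π '' N) (nom.act π x) := supports_image nom hπ hNsupp
  have : a ∈ π '' N := supp_subset_of_supports (hNfin.image _) himg ha
  obtain ⟨b, hb, hba⟩ := this
  apply haN
  rw [← hba]; simpa using hb

lemma swap_fix (nom : Nominal X) {a b : Atom} {x : X}
    (ha : a ∉ suppAct nom.act x) (hb : b ∉ suppAct nom.act x) :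
    nom.act (Equiv.swap a b) x = x := by
  by_cases hab : a = b
  · subst hab
    rw [Equiv.swap_self]
    exact nom.act_one x
  obtain ⟨Na, hNaf, hNas, haNa⟩ := exists_support_not_mem ha
  obtain ⟨Nb, hNbf, hNbs, hbNb⟩ := exists_support_not_mem hb
  obtain ⟨c, hc⟩ := Infinite.exists_notMem_finset
    ((hNaf.toFinset ∪ hNbf.toFinset) ∪ {a, b})
  simp only [Finset.mem_union, Finset.mem_insert, Finset.mem_singleton,
    Set.Finite.mem_toFinset] at hc
  push_neg at hc
  have hac : a ≠ c := fun h => hc.2.1 h.symm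
  have hbc : b ≠ c := fun h => hc.2.2 h.symm
  have hkey : Equiv.swap a b = Equiv.swap a c * Equiv.swap b c * Equiv.swap a c := by
    ext t
    simp only [Equiv.Perm.mul_apply, Equiv.swap_apply_def]
    split_ifs <;> simp_all
  have hfixac : nom.act (Equiv.swap a c) x = x := by
    apply hNas _ (finPerm_swap a c)
    intro n hn
    exact Equiv.swap_apply_of_ne_of_ne (fun h => haNa (h ▸ hn)) (fun h => hc.1.1 (h ▸ hn))
  have hfixbc : nom.act (Equiv.swap b c) x = x := by
    apply hNbs _ (finPerm_swap b c)
    intro n hn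
    exact Equiv.swap_apply_of_ne_of_ne (fun h => hbNb (h ▸ hn)) (fun h => hc.1.2 (h ▸ hn))
  rw [hkey, nom.act_mul, nom.act_mul, hfixac, hfixbc, hfixac]

section NTSLemmas

variable {S' Pr' Ac' : Type} (T : NTS S' Pr' Ac') (τ : Ac')

lemma tauStar_trans {P P'' P' : S'} (h1 : TauStar T τ P P'') (h2 : TauStar T τ P'' P') :
    TauStar T τ P P' := by
  induction h1 with
  | refl _ => exact h2
  | step htr _ ih => exact TauStar.step htr (ih h2)

lemma tauStar_eqv {π : Equiv.Perm Atom} (hπ : IsFinPerm π) (hτπ : T.nomA.act π τ = τ)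
    {P P' : S'} (h : TauStar T τ P P') :
    TauStar T τ (T.nomS.act π P) (T.nomS.act π P') := by
  induction h with
  | refl _ => exact TauStar.refl _
  | step htr _ ih =>
    have := T.tr_eqv π hπ _ _ _ htr
    rw [hτπ] at this
    exact TauStar.step this ih

lemma weakTr_eqv {π : Equiv.Perm Atom} (hπ : IsFinPerm π) (hτπ : T.nomA.act π τ = τ)
    {P P' : S'} {α : Ac'} (h : T.weakTr τ P α P') :
    T.weakTr τ (T.nomS.act π P) (T.nomA.act π α) (T.nomS.act π P') := by
  by_cases h1 : α = τ
  · subst h1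
    rw [hτπ]
    rw [NTS.weakTr, if_pos rfl] at h ⊢
    exact tauStar_eqv T α hπ hτπ h
  · rw [NTS.weakTr, if_neg h1] at h
    obtain ⟨P₁, P₂, hs1, hs2, hs3⟩ := h
    have hs1' := tauStar_eqv T τ hπ hτπ hs1
    have hs2' := T.tr_eqv π hπ _ _ _ hs2
    have hs3' := tauStar_eqv T τ hπ hτπ hs3
    by_cases h2 : T.nomA.act π α = τ
    · rw [NTS.weakTr, if_pos h2]
      rw [h2] at hs2'
      exact tauStar_trans T τ hs1' (TauStar.step hs2' hs3')
    · rw [NTS.weakTr, if_neg h2]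
      exact ⟨_, _, hs1', hs2', hs3'⟩

lemma weakTr_comp {P Q₁ Q₂ Q₃ : S'} {β : Ac'} (h1 : TauStar T τ P Q₁)
    (h2 : T.weakTr τ Q₁ β Q₂) (h3 : TauStar T τ Q₂ Q₃) :
    T.weakTr τ P β Q₃ := by
  by_cases hβ : β = τ
  · subst hβ
    rw [NTS.weakTr, if_pos rfl] at h2 ⊢
    exact tauStar_trans T β h1 (tauStar_trans T β h2 h3)
  · rw [NTS.weakTr, if_neg hβ] at h2 ⊢
    obtain ⟨R₁, R₂, hr1, hr2, hr3⟩ := h2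
    exact ⟨R₁, R₂, tauStar_trans T τ h1 hr1, hr2, tauStar_trans T τ hr3 h3⟩

lemma tauStar_sim (hτ : suppAct T.nomA.act τ = ∅) {R : S' → S' → Prop}
    (hR : T.IsWeakBisim τ R) {P P' Q : S'} (hPQ : R P Q) (h : TauStar T τ P P') :
    ∃ Q', TauStar T τ Q Q' ∧ R P' Q' := by
  induction h generalizing Q with
  | refl P => exact ⟨Q, TauStar.refl Q, hPQ⟩
  | step htr _ ih =>
    have hfr : ∀ a ∈ T.bn τ, a ∉ suppAct T.nomS.act Q := by
      intro a ha
      exfalso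
      have := T.bn_supp τ ha
      rw [hτ] at this
      exact this
    obtain ⟨Q'', hw, hr⟩ := ((hR.2 _ _ hPQ).2) τ _ hfr htr
    rw [NTS.weakTr, if_pos rfl] at hw
    obtain ⟨Q', hQ', hr'⟩ := ih hr
    exact ⟨Q', tauStar_trans T τ hw hQ', hr'⟩

lemma wbisim_eqv {π : Equiv.Perm Atom} (hπ : IsFinPerm π) (hτπ : T.nomA.act π τ = τ)
    {P Q : S'} (h : T.WBisim τ P Q) :
    T.WBisim τ (T.nomS.act π P) (T.nomS.act π Q) := by
  obtain ⟨R, hR, hPQ⟩ := h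
  have hπ' : IsFinPerm π⁻¹ := finPerm_inv hπ
  have hτπ' : T.nomA.act π⁻¹ τ = τ := by
    conv_lhs => rw [← hτπ]
    exact T.nomA.act_inv_act π τ
  refine ⟨fun X Y => R (T.nomS.act π⁻¹ X) (T.nomS.act π⁻¹ Y), ⟨?_, ?_⟩, ?_⟩
  · intro X Y hXY
    exact hR.1 _ _ hXY
  · intro X Y hXY
    constructor
    · intro φ hsat
      have hsat' := T.sat_eqv π⁻¹ hπ' _ _ hsat
      obtain ⟨Y₀, hts, hsat₀, hr₀⟩ := (hR.2 _ _ hXY).1 _ hsat'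
      refine ⟨T.nomS.act π Y₀, ?_, ?_, ?_⟩
      · have := tauStar_eqv T τ hπ hτπ hts
        rwa [T.nomS.act_act_inv] at this
      · have := T.sat_eqv π hπ _ _ hsat₀
        rwa [T.nomP.act_act_inv] at this
      · show R (T.nomS.act π⁻¹ X) (T.nomS.act π⁻¹ (T.nomS.act π Y₀))
        rwa [T.nomS.act_inv_act]
    · intro β X' hfr htrX
      have htr' := T.tr_eqv π⁻¹ hπ' _ _ _ htrX
      have hfr' : ∀ a ∈ T.bn (T.nomA.act π⁻¹ β), a ∉ suppAct T.nomS.act (T.nomS.act π⁻¹ Y) := by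
        intro a ha hmem
        have h1 : (a : Atom) ∈ (π⁻¹ : Equiv.Perm Atom) '' (T.bn β : Set Atom) := by
          rw [← T.bn_eqv π⁻¹ hπ' β]
          exact_mod_cast ha
        have h2 := supp_act_subset T.nomS hπ' Y hmem
        obtain ⟨c, hc, hca⟩ := h2
        obtain ⟨d, hd, hda⟩ := h1
        have : c = d := by
          have := hca.trans hda.symm
          exact (Equiv.injective _ this)
        subst this
        exact hfr c hd hc
      obtain ⟨Y', hw, hr⟩ := (hR.2 _ _ hXY).2 _ _ hfr' htr'
      refine ⟨T.nomS.act π Y', ?_, ?_⟩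
      · have := weakTr_eqv T τ hπ hτπ hw
        rwa [T.nomS.act_act_inv, T.nomA.act_act_inv] at this
      · show R (T.nomS.act π⁻¹ X') (T.nomS.act π⁻¹ (T.nomS.act π Y'))
        rwa [T.nomS.act_inv_act]
  · show R (T.nomS.act π⁻¹ (T.nomS.act π P)) (T.nomS.act π⁻¹ (T.nomS.act π Q))
    rwa [T.nomS.act_inv_act, T.nomS.act_inv_act]

lemma rename_aux :
    ∀ (L : List Atom) (A : Finset Atom) (α : Ac') (P₁ P₂ : S'),
    L.Nodup → (∀ a ∈ L, a ∈ T.bn α) → (∀ a ∈ L, a ∈ A) →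
    suppAct T.nomA.act α ⊆ ↑A → suppAct T.nomS.act P₂ ⊆ ↑A →
    T.tr P₁ α P₂ →
    ∃ π : Equiv.Perm Atom, IsFinPerm π ∧
      T.tr P₁ (T.nomA.act π α) (T.nomS.act π P₂) ∧
      (∀ b ∈ T.bn (T.nomA.act π α), (b ∈ T.bn α ∧ b ∉ L) ∨ (b ∉ A ∧ b ∉ T.bn α)) ∧
      (∀ c : Atom, π c ≠ c → c ∈ L ∨ c ∉ A) ∧
      (∀ (X : Type) (nomX : Nominal X) (x : X),
        (∀ a ∈ L, a ∉ suppAct nomX.act x) → suppAct nomX.act x ⊆ ↑A →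
        nomX.act π x = x) := by
  intro L
  induction L with
  | nil =>
    intro A α P₁ P₂ _ _ _ _ _ htr
    refine ⟨1, finPerm_one, ?_, ?_, ?_, ?_⟩
    · rwa [T.nomA.act_one, T.nomS.act_one]
    · intro b hb
      rw [T.nomA.act_one] at hb
      exact Or.inl ⟨hb, by simp⟩
    · intro c hc; simp at hc
    · intro X nomX x _ _; exact nomX.act_one x
  | cons a L' ih =>
    intro A α P₁ P₂ hnodup hsub hLA hsuppα hsuppP htr
    have ha : a ∈ T.bn α := hsub a (List.mem_cons_self (a := a) (l := L'))
    have haA : a ∈ A := hLA a (List.mem_cons_self (a := a) (l := L'))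
    obtain ⟨b, hb⟩ := Infinite.exists_notMem_finset (A ∪ T.bn α)
    simp only [Finset.mem_union] at hb
    push_neg at hb
    obtain ⟨hbA, hbbn⟩ := hb
    have hab : a ≠ b := fun h => hbA (h ▸ haA)
    have hbsα : b ∉ suppAct T.nomA.act α := fun hc => hbA (hsuppα hc)
    have hbsP : b ∉ suppAct T.nomS.act P₂ := fun hc => hbA (hsuppP hc)
    have htr₁ : T.tr P₁ (T.nomA.act (Equiv.swap a b) α) (T.nomS.act (Equiv.swap a b) P₂) :=
      T.tr_alpha a b P₁ α P₂ ha hbsα hbsP htr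
    set α₁ := T.nomA.act (Equiv.swap a b) α with hα₁
    set P₂' := T.nomS.act (Equiv.swap a b) P₂ with hP₂'
    have hbnα₁ : (T.bn α₁ : Set Atom) = (Equiv.swap a b) '' (T.bn α : Set Atom) :=
      T.bn_eqv _ (finPerm_swap a b) α
    -- facts about the swap on A
    have hswapA : ∀ x ∈ (A : Set Atom), (Equiv.swap a b) x ∈ ((insert b A : Finset Atom) : Set Atom) := by
      intro x hx
      simp only [Finset.coe_insert, Set.mem_insert_iff] at *
      by_cases hxa : x = a
      · subst hxa; rw [Equiv.swap_apply_left]; exact Or.inl rfl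
      · have hxb : x ≠ b := fun h => hbA (h ▸ hx)
        rw [Equiv.swap_apply_of_ne_of_ne hxa hxb]
        exact Or.inr hx
    have hsuppα₁ : suppAct T.nomA.act α₁ ⊆ ↑(insert b A) := by
      intro y hy
      obtain ⟨x, hx, rfl⟩ := supp_act_subset T.nomA (finPerm_swap a b) α hy
      exact hswapA x (hsuppα hx)
    have hsuppP₂' : suppAct T.nomS.act P₂' ⊆ ↑(insert b A) := by
      intro y hy
      obtain ⟨x, hx, rfl⟩ := supp_act_subset T.nomS (finPerm_swap a b) P₂ hy
      exact hswapA x (hsuppP hx)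
    have hsub' : ∀ c ∈ L', c ∈ T.bn α₁ := by
      intro c hc
      have hcbn : c ∈ T.bn α := hsub c (List.mem_cons_of_mem a hc)
      have hca : c ≠ a := fun h => (List.nodup_cons.mp hnodup).1 (h ▸ hc)
      have hcb : c ≠ b := fun h => hbbn (h ▸ hcbn)
      have : (c : Atom) ∈ (T.bn α₁ : Set Atom) := by
        rw [hbnα₁]
        exact ⟨c, hcbn, Equiv.swap_apply_of_ne_of_ne hca hcb⟩
      exact_mod_cast this
    have hLA' : ∀ c ∈ L', c ∈ insert b A := by
      intro c hc
      exact Finset.mem_insert_of_mem (hLA c (List.mem_cons_of_mem a hc))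
    obtain ⟨ρ, hρfin, hρtr, hρbn, hρmove, hρfix⟩ :=
      ih (insert b A) α₁ P₁ P₂' (List.nodup_cons.mp hnodup).2 hsub' hLA' hsuppα₁ hsuppP₂' htr₁
    refine ⟨ρ * Equiv.swap a b, finPerm_mul hρfin (finPerm_swap a b), ?_, ?_, ?_, ?_⟩
    · rwa [T.nomA.act_mul, T.nomS.act_mul]
    · intro b' hb'
      rw [T.nomA.act_mul] at hb'
      rcases hρbn b' hb' with ⟨h1, h2⟩ | ⟨h1, h2⟩
      · -- b' ∈ bn α₁, b' ∉ L'
        have : (b' : Atom) ∈ (Equiv.swap a b) '' (T.bn α : Set Atom) := by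
          rw [← hbnα₁]; exact_mod_cast h1
        obtain ⟨x, hx, rfl⟩ := this
        by_cases hxa : x = a
        · subst hxa
          rw [Equiv.swap_apply_left]
          exact Or.inr ⟨hbA, hbbn⟩
        · have hxb : x ≠ b := fun h => hbbn (h ▸ hx)
          rw [Equiv.swap_apply_of_ne_of_ne hxa hxb] at h2 ⊢
          refine Or.inl ⟨hx, ?_⟩
          intro hmem
          rcases List.mem_cons.mp hmem with h | h
          · exact hxa h
          · exact h2 h
      · -- b' ∉ insert b A, b' ∉ bn α₁
        have hb'A : b' ∉ A := fun h => h1 (Finset.mem_insert_of_mem h)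
        have hb'b : b' ≠ b := fun h => h1 (h ▸ Finset.mem_insert_self b A)
        have hb'a : b' ≠ a := fun h => hb'A (h ▸ haA)
        refine Or.inr ⟨hb'A, ?_⟩
        intro hmem
        apply h2
        have : (b' : Atom) ∈ (T.bn α₁ : Set Atom) := by
          rw [hbnα₁]
          exact ⟨b', hmem, Equiv.swap_apply_of_ne_of_ne hb'a hb'b⟩
        exact_mod_cast this
    · intro c hc
      by_contra hcon
      push_neg at hcon
      obtain ⟨hcL, hcA⟩ := hcon
      have hca : c ≠ a := fun h => hcL (h ▸ List.mem_cons_self (a := a) (l := L'))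
      have hcb : c ≠ b := fun h => hbA (h ▸ hcA)
      have hswapc : (Equiv.swap a b) c = c := Equiv.swap_apply_of_ne_of_ne hca hcb
      have hρc : ρ c = c := by
        by_contra hρc
        rcases hρmove c hρc with h | h
        · exact hcL (List.mem_cons_of_mem a h)
        · exact h (Finset.mem_insert_of_mem hcA)
      apply hc
      simp [Equiv.Perm.mul_apply, hswapc, hρc]
    · intro X nomX x hax hsupp
      rw [nomX.act_mul]
      have hfix1 : nomX.act (Equiv.swap a b) x = x := by
        apply swap_fix
        · exact hax a (List.mem_cons_self (a := a) (l := L'))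
        · exact fun hc => hbA (hsupp hc)
      rw [hfix1]
      apply hρfix
      · intro c hc
        exact hax c (List.mem_cons_of_mem a hc)
      · intro y hy
        exact Finset.mem_insert_of_mem (hsupp hy)

end NTSLemmas

/-- Weak transitions lemma: if `P ≈ Q` and `P ⟹α⟹ P'` with `bn α` fresh for `Q`, then
`Q ⟹α⟹ Q'` for some `Q'` with `P' ≈ Q'`. -/
theorem wbisim_weakTr {S Pr Ac : Type} (T : NTS S Pr Ac) (τ : Ac)
    (hτ : suppAct T.nomA.act τ = ∅) (P Q : S) (h : T.WBisim τ P Q)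
    (α : Ac) (P' : S) (hfresh : ∀ a ∈ T.bn α, a ∉ suppAct T.nomS.act Q)
    (htr : T.weakTr τ P α P') :
    ∃ Q', T.weakTr τ Q α Q' ∧ T.WBisim τ P' Q' := by
  obtain ⟨R, hR, hPQ⟩ := h
  by_cases hα : α = τ
  · subst hα
    rw [NTS.weakTr, if_pos rfl] at htr
    obtain ⟨Q', hQ', hr⟩ := tauStar_sim T α hτ hR hPQ htr
    exact ⟨Q', by rw [NTS.weakTr, if_pos rfl]; exact hQ', ⟨R, hR, hr⟩⟩
  · rw [NTS.weakTr, if_neg hα] at htr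
    obtain ⟨P₁, P₂, h1, h2, h3⟩ := htr
    -- simulate the initial τ-sequence
    obtain ⟨Q₁, hQ₁, hr₁⟩ := tauStar_sim T τ hτ hR hPQ h1
    -- gather finite supports
    obtain ⟨NQ, hNQf, hNQs⟩ := T.nomS.finSupp Q
    obtain ⟨NQ₁, hNQ₁f, hNQ₁s⟩ := T.nomS.finSupp Q₁
    obtain ⟨Nα, hNαf, hNαs⟩ := T.nomA.finSupp α
    obtain ⟨NP₂, hNP₂f, hNP₂s⟩ := T.nomS.finSupp P₂
    set A : Finset Atom :=
      hNQf.toFinset ∪ hNQ₁f.toFinset ∪ hNαf.toFinset ∪ hNP₂f.toFinset ∪ T.bn α with hA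
    have hsuppQ : suppAct T.nomS.act Q ⊆ ↑A := by
      intro x hx
      have := supp_subset_of_supports hNQf hNQs hx
      simp only [hA, Finset.coe_union, Set.mem_union, Finset.mem_coe, Set.Finite.mem_toFinset]
      tauto
    have hsuppQ₁ : suppAct T.nomS.act Q₁ ⊆ ↑A := by
      intro x hx
      have := supp_subset_of_supports hNQ₁f hNQ₁s hx
      simp only [hA, Finset.coe_union, Set.mem_union, Finset.mem_coe, Set.Finite.mem_toFinset]
      tauto
    have hsuppα : suppAct T.nomA.act α ⊆ ↑A := by
      intro x hx
      have := supp_subset_of_supports hNαf hNαs hx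
      simp only [hA, Finset.coe_union, Set.mem_union, Finset.mem_coe, Set.Finite.mem_toFinset]
      tauto
    have hsuppP₂ : suppAct T.nomS.act P₂ ⊆ ↑A := by
      intro x hx
      simp only [hA, Finset.coe_union, Set.mem_union, Finset.mem_coe, Set.Finite.mem_toFinset]
      have := supp_subset_of_supports hNP₂f hNP₂s hx
      tauto
    set L : List Atom := (T.bn α).toList with hL
    have hLmem : ∀ x : Atom, x ∈ L ↔ x ∈ T.bn α := fun x => Finset.mem_toList
    have hLA : ∀ a ∈ L, a ∈ A := by
      intro x hx
      simp only [hA, Finset.mem_union]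
      exact Or.inr ((hLmem x).mp hx)
    obtain ⟨π, hπfin, hπtr, hπbn, _, hπfix⟩ :=
      rename_aux T L A α P₁ P₂ (Finset.nodup_toList _)
        (fun x hx => (hLmem x).mp hx) hLA hsuppα hsuppP₂ h2
    -- every bound name of π·α avoids A
    have hbnfresh : ∀ b ∈ T.bn (T.nomA.act π α), b ∉ A := by
      intro b hb
      rcases hπbn b hb with ⟨h1', h2'⟩ | ⟨h1', _⟩
      · exact absurd ((hLmem b).mpr h1') h2'
      · exact h1'
    -- π fixes Q and τ
    have hπQ : T.nomS.act π Q = Q := by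
      apply hπfix
      · intro x hx
        exact hfresh x ((hLmem x).mp hx)
      · exact hsuppQ
    have hπτ : T.nomA.act π τ = τ := by
      apply hπfix
      · intro x _
        rw [hτ]; exact Set.notMem_empty x
      · rw [hτ]; exact Set.empty_subset _
    have hπτ' : T.nomA.act π⁻¹ τ = τ := by
      conv_lhs => rw [← hπτ]
      exact T.nomA.act_inv_act π τ
    -- simulate the strong (renamed) step from Q₁
    have hfrQ₁ : ∀ b ∈ T.bn (T.nomA.act π α), b ∉ suppAct T.nomS.act Q₁ := by
      intro b hb hmem
      exact hbnfresh b hb (hsuppQ₁ hmem)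
    obtain ⟨Q₂, hw₂, hr₂⟩ := (hR.2 _ _ hr₁).2 _ _ hfrQ₁ hπtr
    -- simulate the final τ-sequence
    have h3' : TauStar T τ (T.nomS.act π P₂) (T.nomS.act π P') :=
      tauStar_eqv T τ hπfin hπτ h3
    obtain ⟨Q₃, hQ₃, hr₃⟩ := tauStar_sim T τ hτ hR hr₂ h3'
    -- compose: Q ⟹ Q₁ ⟹π·α⟹ Q₂ ⟹ Q₃
    have hwQ : T.weakTr τ Q (T.nomA.act π α) Q₃ := weakTr_comp T τ hQ₁ hw₂ hQ₃
    -- transport back along π⁻¹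
    have hwQ' := weakTr_eqv T τ (finPerm_inv hπfin) hπτ' hwQ
    rw [T.nomA.act_inv_act] at hwQ'
    have hπQ' : T.nomS.act π⁻¹ Q = Q := by
      conv_lhs => rw [← hπQ]
      exact T.nomS.act_inv_act π Q
    rw [hπQ'] at hwQ'
    refine ⟨T.nomS.act π⁻¹ Q₃, hwQ', ?_⟩
    have hwb : T.WBisim τ (T.nomS.act π P') Q₃ := ⟨R, hR, hr₃⟩
    have := wbisim_eqv T τ (finPerm_inv hπfin) hπτ' hwb
    rwa [T.nomS.act_inv_act] at this
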